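/- Let (G,Γ₁,Γ₂) be a boundary triple for S. Then for all non-real complex numbers z and ζ there holds Q(z) − Q(ζ)* = (z − ζ̄) γ(ζ)* γ(z), where γ(ζ)* : H → G is the adjoint of γ(ζ). -/

import Mathlib

open ContinuousLinearMap

variable {H : Type*} [NormedAddCommGroup H] [InnerProductSpace ℂ H] [CompleteSpace H]
variable {G : Type*} [NormedAddCommGroup G] [InnerProductSpace ℂ G] [CompleteSpace G]

/-- The operator `M^{A,B}` on `G × G`, `(x₁,x₂) ↦ (A x₁ - B x₂, B x₁ + A x₂)`. -/
noncomputable def MAB (A B : G →L[ℂ] G) : (G × G) →L[ℂ] (G × G) :=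
  ((A.comp (fst ℂ G G)) - (B.comp (snd ℂ G G))).prod
    ((B.comp (fst ℂ G G)) + (A.comp (snd ℂ G G)))

/-- A bounded operator is boundedly invertible if it has a bounded two-sided inverse. -/
def IsBoundedlyInvertible {E F : Type*} [NormedAddCommGroup E] [NormedSpace ℂ E]
    [NormedAddCommGroup F] [NormedSpace ℂ F] (T : E →L[ℂ] F) : Prop :=
  ∃ T' : F →L[ℂ] E, (∀ x, T' (T x) = x) ∧ (∀ y, T (T' y) = y)

/-- A densely defined operator is symmetric if `⟪Sφ, ψ⟫ = ⟪φ, Sψ⟫` on its domain. -/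
def IsSymmetricPMap (S : H →ₗ.[ℂ] H) : Prop :=
  ∀ φ ψ : S.domain, (inner ℂ (S φ) (ψ : H) : ℂ) = inner ℂ (φ : H) (S ψ)

/-- A boundary triple `(G, Γ₁, Γ₂)` for a symmetric operator `S`: two boundary maps
on `dom S*` satisfying the abstract Green identity and joint surjectivity. -/
structure BoundaryTriple (S : H →ₗ.[ℂ] H) (G : Type*) [NormedAddCommGroup G]
    [InnerProductSpace ℂ G] [CompleteSpace G] where
  Γ₁ : S.adjoint.domain →ₗ[ℂ] G
  Γ₂ : S.adjoint.domain →ₗ[ℂ] G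
  green : ∀ φ ψ : S.adjoint.domain,
    (inner ℂ (φ : H) (S.adjoint ψ) : ℂ) - inner ℂ (S.adjoint φ) (ψ : H)
      = (inner ℂ (Γ₁ φ) (Γ₂ ψ) : ℂ) - inner ℂ (Γ₂ φ) (Γ₁ ψ)
  surj : Function.Surjective fun φ : S.adjoint.domain => (Γ₁ φ, Γ₂ φ)

/-- The restriction of a partially defined operator `T` to a submodule `K` of its domain. -/
noncomputable def pmapRestrict (T : H →ₗ.[ℂ] H) (K : Submodule ℂ T.domain) : H →ₗ.[ℂ] H where
  domain := K.map T.domain.subtype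
  toFun := (T.toFun.comp K.subtype).comp
    (Submodule.equivMapOfInjective T.domain.subtype
      (Submodule.injective_subtype T.domain) K).symm.toLinearMap

/-- The distinguished extension `H⁰`: the restriction of `S*` to `ker Γ₁`. -/
noncomputable def H0 (S : H →ₗ.[ℂ] H) (BT : BoundaryTriple S G) : H →ₗ.[ℂ] H :=
  pmapRestrict S.adjoint (LinearMap.ker BT.Γ₁)

/-- The extension `H^{A,B}`: the restriction of `S*` to `{φ : A Γ₁ φ = B Γ₂ φ}`. -/
noncomputable def HAB (S : H →ₗ.[ℂ] H) (BT : BoundaryTriple S G) (A B : G →L[ℂ] G) :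
    H →ₗ.[ℂ] H :=
  pmapRestrict S.adjoint
    (LinearMap.ker ((A.toLinearMap.comp BT.Γ₁) - (B.toLinearMap.comp BT.Γ₂)))

/-- `R` is the resolvent of `T` at `z`: a bounded, everywhere defined two-sided inverse
of `T - z`. -/
def IsResolventOf (T : H →ₗ.[ℂ] H) (z : ℂ) (R : H →L[ℂ] H) : Prop :=
  (∀ f : H, ∃ φ : T.domain, (φ : H) = R f ∧ T φ - z • (φ : H) = f) ∧
  (∀ φ : T.domain, R (T φ - z • (φ : H)) = φ)

/-- `z` is in the resolvent set of `T`. -/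
def InResolventSet (T : H →ₗ.[ℂ] H) (z : ℂ) : Prop := ∃ R, IsResolventOf T z R

/-- `γz` is the `Γ`-field at `z`: the inverse of `Γ₁` restricted to the deficiency
space `N_z = ker (S* - z)`. -/
def IsGammaField (S : H →ₗ.[ℂ] H) (BT : BoundaryTriple S G) (z : ℂ) (γz : G →L[ℂ] H) : Prop :=
  (∀ ξ : G, ∃ φ : S.adjoint.domain, (φ : H) = γz ξ ∧ S.adjoint φ = z • (φ : H) ∧ BT.Γ₁ φ = ξ) ∧
  (∀ φ : S.adjoint.domain, S.adjoint φ = z • (φ : H) → γz (BT.Γ₁ φ) = (φ : H))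

/-- `Qz` is the `Q`-function (Weyl function) at `z`: `Qz = Γ₂ ∘ γz`. -/
def IsQFunction (S : H →ₗ.[ℂ] H) (BT : BoundaryTriple S G) (z : ℂ)
    (γz : G →L[ℂ] H) (Qz : G →L[ℂ] G) : Prop :=
  IsGammaField S BT z γz ∧
    ∀ φ : S.adjoint.domain, S.adjoint φ = z • (φ : H) → Qz (BT.Γ₁ φ) = BT.Γ₂ φ

/-!
Apply Green's identity to `φ = γ(z) ξ ∈ N_z` and `ψ = γ(ζ) η ∈ N_ζ`: since `S* φ = z φ` and
`S* ψ = ζ ψ`, its left side is `(z - ζ̄) ⟪γ(ζ) η, γ(z) ξ⟫`, while `Γ₁ φ = ξ`, `Γ₂ φ = Q(z) ξ`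
(and likewise for `ψ`) turn its right side into `⟪η, Q(z) ξ⟫ - ⟪Q(ζ) η, ξ⟫`.
-/

section

variable {S : H →ₗ.[ℂ] H}

theorem BoundaryTriple.green_of_eigen (BT : BoundaryTriple S G) {z ζ : ℂ}
    {φ ψ : S.adjoint.domain} (hφ : S.adjoint φ = z • (φ : H)) (hψ : S.adjoint ψ = ζ • (ψ : H)) :
    (z - starRingEnd ℂ ζ) * inner ℂ (ψ : H) (φ : H)
      = (inner ℂ (BT.Γ₁ ψ) (BT.Γ₂ φ) : ℂ) - inner ℂ (BT.Γ₂ ψ) (BT.Γ₁ φ) := by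
  rw [← BT.green ψ φ, hφ, hψ, inner_smul_right, inner_smul_left]
  ring

theorem IsQFunction.exists_boundary_values {BT : BoundaryTriple S G} {z : ℂ}
    {γz : G →L[ℂ] H} {Qz : G →L[ℂ] G} (hQ : IsQFunction S BT z γz Qz) (ξ : G) :
    ∃ φ : S.adjoint.domain, (φ : H) = γz ξ ∧ S.adjoint φ = z • (φ : H) ∧
      BT.Γ₁ φ = ξ ∧ BT.Γ₂ φ = Qz ξ := by
  obtain ⟨φ, hγ, hφ, hΓ₁⟩ := hQ.1.1 ξ
  exact ⟨φ, hγ, hφ, hΓ₁, by rw [← hQ.2 φ hφ, hΓ₁]⟩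

end

theorem Q_function_identity (S : H →ₗ.[ℂ] H)
    (BT : BoundaryTriple S G) (z ζ : ℂ)
    (γz γζ : G →L[ℂ] H) (Qz Qζ : G →L[ℂ] G)
    (hQz : IsQFunction S BT z γz Qz) (hQζ : IsQFunction S BT ζ γζ Qζ) :
    Qz - adjoint Qζ = (z - starRingEnd ℂ ζ) • (adjoint γζ ∘L γz) := by
  ext ξ
  refine ext_inner_left ℂ fun η => ?_
  obtain ⟨φ, hγφ, hφ, hΓ₁φ, hΓ₂φ⟩ := hQz.exists_boundary_values ξ
  obtain ⟨ψ, hγψ, hψ, hΓ₁ψ, hΓ₂ψ⟩ := hQζ.exists_boundary_values η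
  calc inner ℂ η ((Qz - adjoint Qζ) ξ)
      = inner ℂ (BT.Γ₁ ψ) (BT.Γ₂ φ) - inner ℂ (BT.Γ₂ ψ) (BT.Γ₁ φ) := by
        rw [hΓ₁φ, hΓ₂φ, hΓ₁ψ, hΓ₂ψ, sub_apply, inner_sub_right, adjoint_inner_right]
    _ = (z - starRingEnd ℂ ζ) * inner ℂ (ψ : H) (φ : H) := (BT.green_of_eigen hφ hψ).symm
    _ = inner ℂ η (((z - starRingEnd ℂ ζ) • (adjoint γζ ∘L γz)) ξ) := by
        rw [hγφ, hγψ, smul_apply, comp_apply, inner_smul_right, adjoint_inner_right]
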